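/- arXiv:cs/0607058 — 2 statements merged into one kernel-verified Lean document; each statement's English description precedes it below -/
import Mathlib

section
/- If the sequent Γ₁ ∪ Γ₂ ⊢ Δ₁ ∪ Δ₂ is derivable, where the set of predicates occurring in Γ₁ ∪ Δ₁ is disjoint from the set of predicates occurring in Γ₂ ∪ Δ₂, then Γ₁ ⊢ Δ₁ is derivable or Γ₂ ⊢ Δ₂ is derivable. -/
namespace Craig

abbrev var : Type := Nat
abbrev tm : Type := var
abbrev pred : Type := Nat

inductive form : Type
  | P : pred → List tm → form
  | Bot : form
  | Top : form
  | And : form → form → form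
  | Or : form → form → form
  | Not : form → form
  | FAll : form → form
  | FEx : form → form
  deriving DecidableEq

def liftSub (s : var → tm) : var → tm
  | 0 => 0
  | n + 1 => (s n) + 1

def fsubst (s : var → tm) : form → form
  | .P i tms => .P i (tms.map s)
  | .Bot => .Bot
  | .Top => .Top
  | .And A B => .And (fsubst s A) (fsubst s B)
  | .Or A B => .Or (fsubst s A) (fsubst s B)
  | .Not A => .Not (fsubst s A)
  | .FAll A => .FAll (fsubst (liftSub s) A)
  | .FEx A => .FEx (fsubst (liftSub s) A)

def preSuc : List Nat → List Nat
  | [] => []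
  | 0 :: l => preSuc l
  | (n + 1) :: l => n :: preSuc l

def fv : form → List var
  | .P _ tms => tms
  | .Bot => []
  | .Top => []
  | .And A B => fv A ++ fv B
  | .Or A B => fv A ++ fv B
  | .Not A => fv A
  | .FAll A => preSuc (fv A)
  | .FEx A => preSuc (fv A)

def posneg : form → Set pred × Set pred
  | .P i _ => ({i}, ∅)
  | .Bot => (∅, ∅)
  | .Top => (∅, ∅)
  | .And A B => ((posneg A).1 ∪ (posneg B).1, (posneg A).2 ∪ (posneg B).2)
  | .Or A B => ((posneg A).1 ∪ (posneg B).1, (posneg A).2 ∪ (posneg B).2)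
  | .Not A => ((posneg A).2, (posneg A).1)
  | .FAll A => posneg A
  | .FEx A => posneg A

def pos (A : form) : Set pred := (posneg A).1
def neg (A : form) : Set pred := (posneg A).2

def fAll (a : var) (A : form) : form :=
  .FAll (fsubst (fun v => if v = a then 0 else v + 1) A)
def fEx (a : var) (A : form) : form :=
  .FEx (fsubst (fun v => if v = a then 0 else v + 1) A)

def FAll_inst (t : tm) : form → form
  | .FAll A => fsubst (fun v => match v with | 0 => t | n + 1 => n) A
  | A => A

def FEx_inst (t : tm) : form → form
  | .FEx A => fsubst (fun v => match v with | 0 => t | n + 1 => n) A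
  | A => A

abbrev Seq : Type := Set form × Set form

def fvs (S : Set form) : Set var := ⋃ A ∈ S, {v | v ∈ fv A}

inductive Deriv : Type
  | Init : Seq → Deriv
  | BotL : Seq → Deriv
  | TopR : Seq → Deriv
  | AndL : Seq → Deriv → Deriv
  | AndR : Seq → Deriv → Deriv → Deriv
  | OrL : Seq → Deriv → Deriv → Deriv
  | OrR : Seq → Deriv → Deriv
  | NotL : Seq → Deriv → Deriv
  | NotR : Seq → Deriv → Deriv
  | AllL : Seq → Deriv → Deriv
  | AllR : Seq → Deriv → Deriv
  | ExL : Seq → Deriv → Deriv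
  | ExR : Seq → Deriv → Deriv
  | WL : Seq → Deriv → Deriv
  | WR : Seq → Deriv → Deriv

def root : Deriv → Seq
  | .Init s => s
  | .BotL s => s
  | .TopR s => s
  | .AndL s _ => s
  | .AndR s _ _ => s
  | .OrL s _ _ => s
  | .OrR s _ => s
  | .NotL s _ => s
  | .NotR s _ => s
  | .AllL s _ => s
  | .AllR s _ => s
  | .ExL s _ => s
  | .ExR s _ => s
  | .WL s _ => s
  | .WR s _ => s

def is_deriv : Deriv → Prop
  | .Init s => s.1.Finite ∧ s.2.Finite ∧ ∃ A, A ∈ s.1 ∧ A ∈ s.2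
  | .BotL s => s.1.Finite ∧ s.2.Finite ∧ form.Bot ∈ s.1
  | .TopR s => s.1.Finite ∧ s.2.Finite ∧ form.Top ∈ s.2
  | .AndL s d => s.1.Finite ∧ s.2.Finite ∧
      ∃ A B, form.And A B ∈ s.1 ∧ is_deriv d ∧ root d = ({A, B} ∪ s.1, s.2)
  | .AndR s dl dr => s.1.Finite ∧ s.2.Finite ∧
      ∃ A B, form.And A B ∈ s.2 ∧ is_deriv dl ∧ root dl = (s.1, s.2 ∪ {A}) ∧
        is_deriv dr ∧ root dr = (s.1, s.2 ∪ {B})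
  | .OrL s dl dr => s.1.Finite ∧ s.2.Finite ∧
      ∃ A B, form.Or A B ∈ s.1 ∧ is_deriv dl ∧ root dl = ({A} ∪ s.1, s.2) ∧
        is_deriv dr ∧ root dr = ({B} ∪ s.1, s.2)
  | .OrR s d => s.1.Finite ∧ s.2.Finite ∧
      ∃ A B, form.Or A B ∈ s.2 ∧ is_deriv d ∧ root d = (s.1, s.2 ∪ {A, B})
  | .NotL s d => s.1.Finite ∧ s.2.Finite ∧
      ∃ C, form.Not C ∈ s.1 ∧ is_deriv d ∧ root d = (s.1, s.2 ∪ {C})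
  | .NotR s d => s.1.Finite ∧ s.2.Finite ∧
      ∃ C, form.Not C ∈ s.2 ∧ is_deriv d ∧ root d = ({C} ∪ s.1, s.2)
  | .AllL s d => s.1.Finite ∧ s.2.Finite ∧
      ∃ A a t, fAll a A ∈ s.1 ∧ is_deriv d ∧
        root d = ({FAll_inst t (fAll a A)} ∪ s.1, s.2)
  | .AllR s d => s.1.Finite ∧ s.2.Finite ∧
      ∃ a A, fAll a A ∈ s.2 ∧ a ∉ fvs (s.1 ∪ s.2) ∧ is_deriv d ∧
        root d = (s.1, s.2 ∪ {A})
  | .ExL s d => s.1.Finite ∧ s.2.Finite ∧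
      ∃ a A, fEx a A ∈ s.1 ∧ a ∉ fvs (s.1 ∪ s.2) ∧ is_deriv d ∧
        root d = ({A} ∪ s.1, s.2)
  | .ExR s d => s.1.Finite ∧ s.2.Finite ∧
      ∃ A a t, fEx a A ∈ s.2 ∧ is_deriv d ∧
        root d = (s.1, s.2 ∪ {FEx_inst t (fEx a A)})
  | .WL s d => ∃ Γ Δ A, Γ.Finite ∧ Δ.Finite ∧ is_deriv d ∧ root d = (Γ, Δ) ∧
      s = ({A} ∪ Γ, Δ)
  | .WR s d => ∃ Γ Δ A, Γ.Finite ∧ Δ.Finite ∧ is_deriv d ∧ root d = (Γ, Δ) ∧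
      s = (Γ, Δ ∪ {A})

def derivable (s : Seq) : Prop := ∃ d, is_deriv d ∧ root d = s

def occurs (A : form) : Set pred := pos A ∪ neg A

/-! Induction on the derivation, for all splittings of its end-sequent at once. The principal
formula of the last rule lies in one half, and the side formulas of its premises only use
predicates of the principal formula, so the splitting lifts to the premises; whenever the premise
halves on that side are derivable, the same rule rebuilds the half-sequent. Weakening is absorbed
by intersecting the halves with the premise. The only interaction between the halves is an axiom
`A ⊢ A` with `A` in opposite halves: then `A` contains no predicate, so it is built from `⊥` and
`⊤` and is refutable or provable on its own (it plays the role of the interpolant `⊥` or `⊤`). -/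

open Set

def occursIn (S : Set form) : Set pred := ⋃ A ∈ S, occurs A

section Occurrences

variable {A B : form} {S T : Set form}

@[simp] theorem occurs_P (i : pred) (ts : List tm) : occurs (.P i ts) = {i} := by
  simp [occurs, pos, neg, posneg]

@[simp] theorem occurs_and : occurs (.And A B) = occurs A ∪ occurs B := by
  simp only [occurs, pos, neg, posneg]
  exact union_union_union_comm _ _ _ _

@[simp] theorem occurs_or : occurs (.Or A B) = occurs A ∪ occurs B := by
  simp only [occurs, pos, neg, posneg]
  exact union_union_union_comm _ _ _ _

@[simp] theorem occurs_not : occurs (.Not A) = occurs A := union_comm _ _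

@[simp] theorem occurs_FAll : occurs (.FAll A) = occurs A := rfl

@[simp] theorem occurs_FEx : occurs (.FEx A) = occurs A := rfl

theorem posneg_fsubst (σ : var → tm) (A : form) : posneg (fsubst σ A) = posneg A := by
  induction A generalizing σ <;> simp_all [fsubst, posneg]

@[simp] theorem occurs_fsubst (σ : var → tm) (A : form) : occurs (fsubst σ A) = occurs A := by
  simp [occurs, pos, neg, posneg_fsubst]

@[simp] theorem occurs_fAll (a : var) (A : form) : occurs (fAll a A) = occurs A := by
  simp [fAll]

@[simp] theorem occurs_fEx (a : var) (A : form) : occurs (fEx a A) = occurs A := by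
  simp [fEx]

@[simp] theorem occurs_FAll_inst (t : tm) (A : form) : occurs (FAll_inst t A) = occurs A := by
  cases A <;> simp [FAll_inst]

@[simp] theorem occurs_FEx_inst (t : tm) (A : form) : occurs (FEx_inst t A) = occurs A := by
  cases A <;> simp [FEx_inst]

@[simp] theorem occursIn_union : occursIn (S ∪ T) = occursIn S ∪ occursIn T := biUnion_union _ _ _

@[simp] theorem occursIn_insert : occursIn (insert A S) = occurs A ∪ occursIn S :=
  biUnion_insert _ _ _

@[simp] theorem occursIn_singleton : occursIn {A} = occurs A := biUnion_singleton _ _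

theorem occurs_subset_occursIn (h : A ∈ S) : occurs A ⊆ occursIn S := subset_biUnion_of_mem h

theorem occursIn_mono (h : S ⊆ T) : occursIn S ⊆ occursIn T := biUnion_subset_biUnion_left h

end Occurrences

theorem fvs_mono {S T : Set form} (h : S ⊆ T) : fvs S ⊆ fvs T := biUnion_subset_biUnion_left h

theorem fsubst_eq_self_of_occurs_eq_empty {A : form} (σ : var → tm) (h : occurs A = ∅) :
    fsubst σ A = A := by
  induction A generalizing σ <;> simp_all [fsubst]

theorem fv_eq_nil_of_occurs_eq_empty {A : form} (h : occurs A = ∅) : fv A = [] := by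
  induction A <;> simp_all [fv, preSuc]

namespace derivable

variable {Γ Δ Γ' Δ' : Set form} {A B : form}

theorem finite (h : derivable (Γ, Δ)) : Γ.Finite ∧ Δ.Finite := by
  obtain ⟨d, hd, hr⟩ := h
  suffices (root d).1.Finite ∧ (root d).2.Finite by rwa [hr] at this
  cases d with
  | WL s d =>
    obtain ⟨Γ, Δ, A, hΓ, hΔ, -, -, rfl⟩ := hd
    exact ⟨(finite_singleton A).union hΓ, hΔ⟩
  | WR s d =>
    obtain ⟨Γ, Δ, A, hΓ, hΔ, -, -, rfl⟩ := hd
    exact ⟨hΓ, hΔ.union (finite_singleton A)⟩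
  | _ => exact ⟨hd.1, hd.2.1⟩

theorem init (hΓ : Γ.Finite) (hΔ : Δ.Finite) (hA : A ∈ Γ) (hA' : A ∈ Δ) : derivable (Γ, Δ) :=
  ⟨.Init _, ⟨hΓ, hΔ, A, hA, hA'⟩, rfl⟩

theorem botL (hΓ : Γ.Finite) (hΔ : Δ.Finite) (h : .Bot ∈ Γ) : derivable (Γ, Δ) :=
  ⟨.BotL _, ⟨hΓ, hΔ, h⟩, rfl⟩

theorem topR (hΓ : Γ.Finite) (hΔ : Δ.Finite) (h : .Top ∈ Δ) : derivable (Γ, Δ) :=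
  ⟨.TopR _, ⟨hΓ, hΔ, h⟩, rfl⟩

theorem andL (hF : .And A B ∈ Γ) (h : derivable ({A, B} ∪ Γ, Δ)) : derivable (Γ, Δ) :=
  let ⟨d, hd, hr⟩ := h
  ⟨.AndL _ d, ⟨h.finite.1.subset subset_union_right, h.finite.2, A, B, hF, hd, hr⟩, rfl⟩

theorem andR (hF : .And A B ∈ Δ) (hA : derivable (Γ, Δ ∪ {A})) (hB : derivable (Γ, Δ ∪ {B})) :
    derivable (Γ, Δ) :=
  let ⟨dA, hdA, hrA⟩ := hA
  let ⟨dB, hdB, hrB⟩ := hB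
  ⟨.AndR _ dA dB,
    ⟨hA.finite.1, hA.finite.2.subset subset_union_left, A, B, hF, hdA, hrA, hdB, hrB⟩, rfl⟩

theorem orL (hF : .Or A B ∈ Γ) (hA : derivable ({A} ∪ Γ, Δ)) (hB : derivable ({B} ∪ Γ, Δ)) :
    derivable (Γ, Δ) :=
  let ⟨dA, hdA, hrA⟩ := hA
  let ⟨dB, hdB, hrB⟩ := hB
  ⟨.OrL _ dA dB,
    ⟨hA.finite.1.subset subset_union_right, hA.finite.2, A, B, hF, hdA, hrA, hdB, hrB⟩, rfl⟩

theorem orR (hF : .Or A B ∈ Δ) (h : derivable (Γ, Δ ∪ {A, B})) : derivable (Γ, Δ) :=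
  let ⟨d, hd, hr⟩ := h
  ⟨.OrR _ d, ⟨h.finite.1, h.finite.2.subset subset_union_left, A, B, hF, hd, hr⟩, rfl⟩

theorem notL (hF : .Not A ∈ Γ) (h : derivable (Γ, Δ ∪ {A})) : derivable (Γ, Δ) :=
  let ⟨d, hd, hr⟩ := h
  ⟨.NotL _ d, ⟨h.finite.1, h.finite.2.subset subset_union_left, A, hF, hd, hr⟩, rfl⟩

theorem notR (hF : .Not A ∈ Δ) (h : derivable ({A} ∪ Γ, Δ)) : derivable (Γ, Δ) :=
  let ⟨d, hd, hr⟩ := h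
  ⟨.NotR _ d, ⟨h.finite.1.subset subset_union_right, h.finite.2, A, hF, hd, hr⟩, rfl⟩

theorem allL {a : var} {t : tm} (hF : fAll a A ∈ Γ)
    (h : derivable ({FAll_inst t (fAll a A)} ∪ Γ, Δ)) : derivable (Γ, Δ) :=
  let ⟨d, hd, hr⟩ := h
  ⟨.AllL _ d, ⟨h.finite.1.subset subset_union_right, h.finite.2, A, a, t, hF, hd, hr⟩, rfl⟩

theorem allR {a : var} (hF : fAll a A ∈ Δ) (ha : a ∉ fvs (Γ ∪ Δ)) (h : derivable (Γ, Δ ∪ {A})) :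
    derivable (Γ, Δ) :=
  let ⟨d, hd, hr⟩ := h
  ⟨.AllR _ d, ⟨h.finite.1, h.finite.2.subset subset_union_left, a, A, hF, ha, hd, hr⟩, rfl⟩

theorem exL {a : var} (hF : fEx a A ∈ Γ) (ha : a ∉ fvs (Γ ∪ Δ)) (h : derivable ({A} ∪ Γ, Δ)) :
    derivable (Γ, Δ) :=
  let ⟨d, hd, hr⟩ := h
  ⟨.ExL _ d, ⟨h.finite.1.subset subset_union_right, h.finite.2, a, A, hF, ha, hd, hr⟩, rfl⟩

theorem exR {a : var} {t : tm} (hF : fEx a A ∈ Δ)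
    (h : derivable (Γ, Δ ∪ {FEx_inst t (fEx a A)})) : derivable (Γ, Δ) :=
  let ⟨d, hd, hr⟩ := h
  ⟨.ExR _ d, ⟨h.finite.1, h.finite.2.subset subset_union_left, A, a, t, hF, hd, hr⟩, rfl⟩

theorem weakenL (h : derivable (Γ, Δ)) : derivable ({A} ∪ Γ, Δ) :=
  let ⟨d, hd, hr⟩ := h
  ⟨.WL _ d, ⟨Γ, Δ, A, h.finite.1, h.finite.2, hd, hr, rfl⟩, rfl⟩

theorem weakenR (h : derivable (Γ, Δ)) : derivable (Γ, Δ ∪ {A}) :=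
  let ⟨d, hd, hr⟩ := h
  ⟨.WR _ d, ⟨Γ, Δ, A, h.finite.1, h.finite.2, hd, hr, rfl⟩, rfl⟩

theorem union_left {S : Set form} (h : derivable (Γ, Δ)) (hS : S.Finite) :
    derivable (S ∪ Γ, Δ) := by
  induction S, hS using Finite.induction_on with
  | empty => simpa using h
  | @insert A S _ _ ih => simpa [insert_union] using ih.weakenL (A := A)

theorem union_right {S : Set form} (h : derivable (Γ, Δ)) (hS : S.Finite) :
    derivable (Γ, Δ ∪ S) := by
  induction S, hS using Finite.induction_on with
  | empty => simpa using h
  | @insert A S _ _ ih => simpa [union_insert] using ih.weakenR (A := A)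

theorem mono (h : derivable (Γ, Δ)) (hΓ : Γ ⊆ Γ') (hΔ : Δ ⊆ Δ')
    (hΓ' : Γ'.Finite := by toFinite_tac) (hΔ' : Δ'.Finite := by toFinite_tac) :
    derivable (Γ', Δ') := by
  simpa [union_eq_self_of_subset_right hΓ, union_eq_self_of_subset_left hΔ]
    using (h.union_left hΓ').union_right hΔ'

end derivable

theorem derivable_or_of_occurs_eq_empty : ∀ {A : form}, occurs A = ∅ →
    derivable ({A}, ∅) ∨ derivable (∅, {A})
  | .P _ _, h => by simp at h
  | .Bot, _ => .inl (.botL (toFinite _) (toFinite _) rfl)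
  | .Top, _ => .inr (.topR (toFinite _) (toFinite _) rfl)
  | .And A B, h => by
    rw [occurs_and, union_empty_iff] at h
    rcases derivable_or_of_occurs_eq_empty h.1 with hA | hA
    · exact .inl (.andL rfl (hA.mono (by simp) subset_rfl))
    rcases derivable_or_of_occurs_eq_empty h.2 with hB | hB
    · exact .inl (.andL rfl (hB.mono (by simp) subset_rfl))
    · exact .inr (.andR rfl (hA.mono subset_rfl (by simp)) (hB.mono subset_rfl (by simp)))
  | .Or A B, h => by
    rw [occurs_or, union_empty_iff] at h
    rcases derivable_or_of_occurs_eq_empty h.1 with hA | hA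
    · rcases derivable_or_of_occurs_eq_empty h.2 with hB | hB
      · exact .inl (.orL rfl (hA.mono (by simp) subset_rfl) (hB.mono (by simp) subset_rfl))
      · exact .inr (.orR rfl (hB.mono subset_rfl (by simp)))
    · exact .inr (.orR rfl (hA.mono subset_rfl (by simp)))
  | .Not A, h => by
    rcases derivable_or_of_occurs_eq_empty (occurs_not ▸ h) with hA | hA
    · exact .inr (.notR rfl (hA.mono (by simp) (by simp)))
    · exact .inl (.notL rfl (hA.mono (by simp) (by simp)))
  | .FAll A, h => by
    replace h : occurs A = ∅ := h
    -- without predicates `A` has no free variables, so binding or instantiating `0` leaves it fixed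
    have hA : fAll 0 A = .FAll A := by rw [fAll, fsubst_eq_self_of_occurs_eq_empty _ h]
    rcases derivable_or_of_occurs_eq_empty h with hA' | hA'
    · refine .inl (.allL (A := A) (a := 0) (t := 0) (hA ▸ rfl) ?_)
      rw [hA, FAll_inst, fsubst_eq_self_of_occurs_eq_empty _ h]
      exact hA'.mono (by simp) subset_rfl
    · refine .inr (.allR (A := A) (a := 0) (hA ▸ rfl) ?_ (hA'.mono subset_rfl (by simp)))
      simp [fvs, fv_eq_nil_of_occurs_eq_empty (A := .FAll A) h]
  | .FEx A, h => by
    replace h : occurs A = ∅ := h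
    have hA : fEx 0 A = .FEx A := by rw [fEx, fsubst_eq_self_of_occurs_eq_empty _ h]
    rcases derivable_or_of_occurs_eq_empty h with hA' | hA'
    · refine .inl (.exL (A := A) (a := 0) (hA ▸ rfl) ?_ (hA'.mono (by simp) subset_rfl))
      simp [fvs, fv_eq_nil_of_occurs_eq_empty (A := .FEx A) h]
    · refine .inr (.exR (A := A) (a := 0) (t := 0) (hA ▸ rfl) ?_)
      rw [hA, FEx_inst, fsubst_eq_self_of_occurs_eq_empty _ h]
      exact hA'.mono subset_rfl (by simp)

def Splits (s : Seq) : Prop :=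
  ∀ ⦃Γ₁ Γ₂ Δ₁ Δ₂ : Set form⦄, s = (Γ₁ ∪ Γ₂, Δ₁ ∪ Δ₂) →
    Disjoint (occursIn (Γ₁ ∪ Δ₁)) (occursIn (Γ₂ ∪ Δ₂)) → derivable (Γ₁, Δ₁) ∨ derivable (Γ₂, Δ₂)

section Splits

variable {Γ Δ Γ₁ Γ₂ Δ₁ Δ₂ L R : Set form} {A B F : form}

theorem splits_of_mem_fst (hF : F ∈ Γ)
    (h : ∀ ⦃Γ₁ Γ₂ Δ₁ Δ₂ : Set form⦄, (Γ, Δ) = (Γ₁ ∪ Γ₂, Δ₁ ∪ Δ₂) → F ∈ Γ₁ →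
      Disjoint (occursIn (Γ₁ ∪ Δ₁)) (occursIn (Γ₂ ∪ Δ₂)) →
      derivable (Γ₁, Δ₁) ∨ derivable (Γ₂, Δ₂)) :
    Splits (Γ, Δ) := by
  rintro Γ₁ Γ₂ Δ₁ Δ₂ hs hsep
  rcases (Prod.mk.inj hs).1 ▸ hF with hF | hF
  · exact h hs hF hsep
  · exact (h (by rw [hs, union_comm Γ₁, union_comm Δ₁]) hF hsep.symm).symm

theorem splits_of_mem_snd (hF : F ∈ Δ)
    (h : ∀ ⦃Γ₁ Γ₂ Δ₁ Δ₂ : Set form⦄, (Γ, Δ) = (Γ₁ ∪ Γ₂, Δ₁ ∪ Δ₂) → F ∈ Δ₁ →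
      Disjoint (occursIn (Γ₁ ∪ Δ₁)) (occursIn (Γ₂ ∪ Δ₂)) →
      derivable (Γ₁, Δ₁) ∨ derivable (Γ₂, Δ₂)) :
    Splits (Γ, Δ) := by
  rintro Γ₁ Γ₂ Δ₁ Δ₂ hs hsep
  rcases (Prod.mk.inj hs).2 ▸ hF with hF | hF
  · exact h hs hF hsep
  · exact (h (by rw [hs, union_comm Γ₁, union_comm Δ₁]) hF hsep.symm).symm

theorem Splits.extend_fst (h : Splits (L ∪ (Γ₁ ∪ Γ₂), Δ₁ ∪ Δ₂)) (hF : F ∈ Γ₁ ∪ Δ₁)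
    (hL : occursIn L ⊆ occurs F) (hsep : Disjoint (occursIn (Γ₁ ∪ Δ₁)) (occursIn (Γ₂ ∪ Δ₂))) :
    derivable (L ∪ Γ₁, Δ₁) ∨ derivable (Γ₂, Δ₂) := by
  refine h (by rw [union_assoc]) (hsep.mono_left ?_)
  rw [union_assoc, occursIn_union]
  exact union_subset (hL.trans (occurs_subset_occursIn hF)) subset_rfl

theorem Splits.extend_snd (h : Splits (Γ₁ ∪ Γ₂, Δ₁ ∪ Δ₂ ∪ R)) (hF : F ∈ Γ₁ ∪ Δ₁)
    (hR : occursIn R ⊆ occurs F) (hsep : Disjoint (occursIn (Γ₁ ∪ Δ₁)) (occursIn (Γ₂ ∪ Δ₂))) :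
    derivable (Γ₁, Δ₁ ∪ R) ∨ derivable (Γ₂, Δ₂) := by
  refine h (by rw [union_right_comm]) (hsep.mono_left ?_)
  rw [← union_assoc, occursIn_union]
  exact union_subset subset_rfl (hR.trans (occurs_subset_occursIn hF))

theorem splits_init (hΓ : Γ.Finite) (hΔ : Δ.Finite) (hA : A ∈ Γ) (hA' : A ∈ Δ) :
    Splits (Γ, Δ) := by
  refine splits_of_mem_fst hA ?_
  rintro Γ₁ Γ₂ Δ₁ Δ₂ ⟨⟩ hA₁ hsep
  obtain ⟨hΓ₁, hΓ₂⟩ := finite_union.1 hΓ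
  obtain ⟨hΔ₁, hΔ₂⟩ := finite_union.1 hΔ
  rcases hA' with hA₁' | hA₂'
  · exact .inl (.init hΓ₁ hΔ₁ hA₁ hA₁')
  have hA : occurs A = ∅ :=
    (hsep.mono_left (occurs_subset_occursIn (.inl hA₁))).eq_bot_of_le
      (occurs_subset_occursIn (.inr hA₂'))
  rcases derivable_or_of_occurs_eq_empty hA with h | h
  · exact .inl (h.mono (by simpa) (empty_subset _) hΓ₁ hΔ₁)
  · exact .inr (h.mono (empty_subset _) (by simpa) hΓ₂ hΔ₂)

theorem splits_botL (hΓ : Γ.Finite) (hΔ : Δ.Finite) (h : .Bot ∈ Γ) : Splits (Γ, Δ) := by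
  refine splits_of_mem_fst h ?_
  rintro Γ₁ Γ₂ Δ₁ Δ₂ ⟨⟩ h₁ -
  exact .inl (.botL (finite_union.1 hΓ).1 (finite_union.1 hΔ).1 h₁)

theorem splits_topR (hΓ : Γ.Finite) (hΔ : Δ.Finite) (h : .Top ∈ Δ) : Splits (Γ, Δ) := by
  refine splits_of_mem_snd h ?_
  rintro Γ₁ Γ₂ Δ₁ Δ₂ ⟨⟩ h₁ -
  exact .inl (.topR (finite_union.1 hΓ).1 (finite_union.1 hΔ).1 h₁)

theorem Splits.andL (hF : .And A B ∈ Γ) (h : Splits ({A, B} ∪ Γ, Δ)) : Splits (Γ, Δ) := by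
  refine splits_of_mem_fst hF ?_
  rintro Γ₁ Γ₂ Δ₁ Δ₂ ⟨⟩ hF₁ hsep
  exact (h.extend_fst (.inl hF₁) (by simp) hsep).imp_left (.andL hF₁)

theorem Splits.andR (hF : .And A B ∈ Δ) (hA : Splits (Γ, Δ ∪ {A})) (hB : Splits (Γ, Δ ∪ {B})) :
    Splits (Γ, Δ) := by
  refine splits_of_mem_snd hF ?_
  rintro Γ₁ Γ₂ Δ₁ Δ₂ ⟨⟩ hF₁ hsep
  rcases hA.extend_snd (.inr hF₁) (by simp) hsep with hA₁ | h₂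
  · exact (hB.extend_snd (.inr hF₁) (by simp) hsep).imp_left (.andR hF₁ hA₁)
  · exact .inr h₂

theorem Splits.orL (hF : .Or A B ∈ Γ) (hA : Splits ({A} ∪ Γ, Δ)) (hB : Splits ({B} ∪ Γ, Δ)) :
    Splits (Γ, Δ) := by
  refine splits_of_mem_fst hF ?_
  rintro Γ₁ Γ₂ Δ₁ Δ₂ ⟨⟩ hF₁ hsep
  rcases hA.extend_fst (.inl hF₁) (by simp) hsep with hA₁ | h₂
  · exact (hB.extend_fst (.inl hF₁) (by simp) hsep).imp_left (.orL hF₁ hA₁)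
  · exact .inr h₂

theorem Splits.orR (hF : .Or A B ∈ Δ) (h : Splits (Γ, Δ ∪ {A, B})) : Splits (Γ, Δ) := by
  refine splits_of_mem_snd hF ?_
  rintro Γ₁ Γ₂ Δ₁ Δ₂ ⟨⟩ hF₁ hsep
  exact (h.extend_snd (.inr hF₁) (by simp) hsep).imp_left (.orR hF₁)

theorem Splits.notL (hF : .Not A ∈ Γ) (h : Splits (Γ, Δ ∪ {A})) : Splits (Γ, Δ) := by
  refine splits_of_mem_fst hF ?_
  rintro Γ₁ Γ₂ Δ₁ Δ₂ ⟨⟩ hF₁ hsep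
  exact (h.extend_snd (.inl hF₁) (by simp) hsep).imp_left (.notL hF₁)

theorem Splits.notR (hF : .Not A ∈ Δ) (h : Splits ({A} ∪ Γ, Δ)) : Splits (Γ, Δ) := by
  refine splits_of_mem_snd hF ?_
  rintro Γ₁ Γ₂ Δ₁ Δ₂ ⟨⟩ hF₁ hsep
  exact (h.extend_fst (.inr hF₁) (by simp) hsep).imp_left (.notR hF₁)

theorem Splits.allL {a : var} {t : tm} (hF : fAll a A ∈ Γ)
    (h : Splits ({FAll_inst t (fAll a A)} ∪ Γ, Δ)) : Splits (Γ, Δ) := by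
  refine splits_of_mem_fst hF ?_
  rintro Γ₁ Γ₂ Δ₁ Δ₂ ⟨⟩ hF₁ hsep
  exact (h.extend_fst (.inl hF₁) (by simp) hsep).imp_left (.allL hF₁)

theorem Splits.allR {a : var} (hF : fAll a A ∈ Δ) (ha : a ∉ fvs (Γ ∪ Δ))
    (h : Splits (Γ, Δ ∪ {A})) : Splits (Γ, Δ) := by
  refine splits_of_mem_snd hF ?_
  rintro Γ₁ Γ₂ Δ₁ Δ₂ ⟨⟩ hF₁ hsep
  have ha₁ : a ∉ fvs (Γ₁ ∪ Δ₁) :=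
    fun h => ha (fvs_mono (union_subset_union subset_union_left subset_union_left) h)
  exact (h.extend_snd (.inr hF₁) (by simp) hsep).imp_left (.allR hF₁ ha₁)

theorem Splits.exL {a : var} (hF : fEx a A ∈ Γ) (ha : a ∉ fvs (Γ ∪ Δ))
    (h : Splits ({A} ∪ Γ, Δ)) : Splits (Γ, Δ) := by
  refine splits_of_mem_fst hF ?_
  rintro Γ₁ Γ₂ Δ₁ Δ₂ ⟨⟩ hF₁ hsep
  have ha₁ : a ∉ fvs (Γ₁ ∪ Δ₁) :=
    fun h => ha (fvs_mono (union_subset_union subset_union_left subset_union_left) h)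
  exact (h.extend_fst (.inl hF₁) (by simp) hsep).imp_left (.exL hF₁ ha₁)

theorem Splits.exR {a : var} {t : tm} (hF : fEx a A ∈ Δ)
    (h : Splits (Γ, Δ ∪ {FEx_inst t (fEx a A)})) : Splits (Γ, Δ) := by
  refine splits_of_mem_snd hF ?_
  rintro Γ₁ Γ₂ Δ₁ Δ₂ ⟨⟩ hF₁ hsep
  exact (h.extend_snd (.inr hF₁) (by simp) hsep).imp_left (.exR hF₁)

theorem Splits.mono {Γ' Δ' : Set form} (h : Splits (Γ, Δ)) (hΓ : Γ ⊆ Γ') (hΔ : Δ ⊆ Δ')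
    (hΓ' : Γ'.Finite) (hΔ' : Δ'.Finite) : Splits (Γ', Δ') := by
  rintro Γ₁ Γ₂ Δ₁ Δ₂ ⟨⟩ hsep
  obtain ⟨hΓ₁, hΓ₂⟩ := finite_union.1 hΓ'
  obtain ⟨hΔ₁, hΔ₂⟩ := finite_union.1 hΔ'
  have hs : (Γ, Δ) = ((Γ₁ ∩ Γ) ∪ (Γ₂ ∩ Γ), (Δ₁ ∩ Δ) ∪ (Δ₂ ∩ Δ)) := by
    rw [← union_inter_distrib_right, ← union_inter_distrib_right, inter_eq_right.2 hΓ,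
      inter_eq_right.2 hΔ]
  have hsub (X Y S T : Set form) : X ∩ S ∪ Y ∩ T ⊆ X ∪ Y :=
    union_subset_union inter_subset_left inter_subset_left
  exact (h hs (hsep.mono (occursIn_mono (hsub _ _ _ _)) (occursIn_mono (hsub _ _ _ _)))).imp
    (·.mono inter_subset_left inter_subset_left hΓ₁ hΔ₁)
    (·.mono inter_subset_left inter_subset_left hΓ₂ hΔ₂)

end Splits

theorem splits_root {d : Deriv} (hd : is_deriv d) : Splits (root d) := by
  induction d with
  | Init s => obtain ⟨hΓ, hΔ, A, hA, hA'⟩ := hd; exact splits_init hΓ hΔ hA hA'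
  | BotL s => obtain ⟨hΓ, hΔ, h⟩ := hd; exact splits_botL hΓ hΔ h
  | TopR s => obtain ⟨hΓ, hΔ, h⟩ := hd; exact splits_topR hΓ hΔ h
  | AndL s d ih => obtain ⟨-, -, A, B, hF, hd, hr⟩ := hd; exact .andL hF (hr ▸ ih hd)
  | AndR s dA dB ihA ihB =>
    obtain ⟨-, -, A, B, hF, hdA, hrA, hdB, hrB⟩ := hd
    exact .andR hF (hrA ▸ ihA hdA) (hrB ▸ ihB hdB)
  | OrL s dA dB ihA ihB =>
    obtain ⟨-, -, A, B, hF, hdA, hrA, hdB, hrB⟩ := hd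
    exact .orL hF (hrA ▸ ihA hdA) (hrB ▸ ihB hdB)
  | OrR s d ih => obtain ⟨-, -, A, B, hF, hd, hr⟩ := hd; exact .orR hF (hr ▸ ih hd)
  | NotL s d ih => obtain ⟨-, -, A, hF, hd, hr⟩ := hd; exact .notL hF (hr ▸ ih hd)
  | NotR s d ih => obtain ⟨-, -, A, hF, hd, hr⟩ := hd; exact .notR hF (hr ▸ ih hd)
  | AllL s d ih => obtain ⟨-, -, A, a, t, hF, hd, hr⟩ := hd; exact .allL hF (hr ▸ ih hd)
  | AllR s d ih => obtain ⟨-, -, a, A, hF, ha, hd, hr⟩ := hd; exact .allR hF ha (hr ▸ ih hd)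
  | ExL s d ih => obtain ⟨-, -, a, A, hF, ha, hd, hr⟩ := hd; exact .exL hF ha (hr ▸ ih hd)
  | ExR s d ih => obtain ⟨-, -, A, a, t, hF, hd, hr⟩ := hd; exact .exR hF (hr ▸ ih hd)
  | WL s d ih =>
    obtain ⟨Γ, Δ, A, hΓ, hΔ, hd, hr, rfl⟩ := hd
    exact (hr ▸ ih hd).mono subset_union_right subset_rfl ((finite_singleton A).union hΓ) hΔ
  | WR s d ih =>
    obtain ⟨Γ, Δ, A, hΓ, hΔ, hd, hr, rfl⟩ := hd
    exact (hr ▸ ih hd).mono subset_rfl subset_union_left hΓ (hΔ.union (finite_singleton A))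

theorem craig_disjoint_languages (Γ₁ Γ₂ Δ₁ Δ₂ : Set form)
    (hdisj : (⋃ A ∈ Γ₁ ∪ Δ₁, occurs A) ∩ (⋃ A ∈ Γ₂ ∪ Δ₂, occurs A) = ∅)
    (hder : derivable (Γ₁ ∪ Γ₂, Δ₁ ∪ Δ₂)) :
    derivable (Γ₁, Δ₁) ∨ derivable (Γ₂, Δ₂) := by
  obtain ⟨d, hd, hr⟩ := hder
  exact splits_root hd hr (disjoint_iff_inter_eq_empty.2 hdisj)

end Craig
end

section
/- Weakening on the left is admissible: if the sequent Γ ⊢ Δ is derivable by a derivation not using the explicit weakening rules, then for any formula A, the sequent {A} ∪ Γ ⊢ Δ is derivable by a derivation of the same height not using explicit weakening. -/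
/-!
Weakening is proved together with substitution of variables: for a finite `Θ` and any
substitution `σ`, every weakening-free derivation of `Γ ⊢ Δ` is rebuilt, rule by rule and hence
with the same height, into one of `Θ, σΓ ⊢ σΔ`. The generalisation is what makes the
eigenvariable rules ∀R and ∃L go through: their eigenvariable `a` may occur in `Θ` or in the
image of `σ`, so the premise is transformed instead under `σ[a ↦ b]` for a fresh `b`, which
becomes the new eigenvariable. Since a substituted `fAll a B` has to be written again as
`fAll b B'`, the same fresh renaming also appears in ∀L and ∃R.
-/

namespace Craig

def noW : Deriv → Prop
  | .Init _ => True
  | .BotL _ => True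
  | .TopR _ => True
  | .AndL _ d => noW d
  | .AndR _ dl dr => noW dl ∧ noW dr
  | .OrL _ dl dr => noW dl ∧ noW dr
  | .OrR _ d => noW d
  | .NotL _ d => noW d
  | .NotR _ d => noW d
  | .AllL _ d => noW d
  | .AllR _ d => noW d
  | .ExL _ d => noW d
  | .ExR _ d => noW d
  | .WL _ _ => False
  | .WR _ _ => False

def height : Deriv → Nat
  | .Init _ => 0
  | .BotL _ => 0
  | .TopR _ => 0
  | .AndL _ d => height d + 1
  | .AndR _ dl dr => max (height dl) (height dr) + 1
  | .OrL _ dl dr => max (height dl) (height dr) + 1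
  | .OrR _ d => height d + 1
  | .NotL _ d => height d + 1
  | .NotR _ d => height d + 1
  | .AllL _ d => height d + 1
  | .AllR _ d => height d + 1
  | .ExL _ d => height d + 1
  | .ExR _ d => height d + 1
  | .WL _ d => height d + 1
  | .WR _ d => height d + 1

open Function

lemma liftSub_comp (σ τ : var → tm) : liftSub (σ ∘ τ) = liftSub σ ∘ liftSub τ := by
  funext v; cases v <;> rfl

lemma fsubst_fsubst (σ τ : var → tm) (A : form) :
    fsubst σ (fsubst τ A) = fsubst (σ ∘ τ) A := by
  induction A generalizing σ τ <;> simp_all [fsubst, liftSub_comp]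

lemma mem_preSuc {n : Nat} {l : List Nat} : n ∈ preSuc l ↔ n + 1 ∈ l := by
  induction l with
  | nil => simp [preSuc]
  | cons a l ih => cases a <;> simp [preSuc, ih]

lemma fsubst_congr {σ τ : var → tm} {A : form} (h : ∀ x ∈ fv A, σ x = τ x) :
    fsubst σ A = fsubst τ A := by
  induction A generalizing σ τ with
  | P i tms => simpa [fsubst, fv] using List.map_congr_left h
  | Bot | Top => rfl
  | And A B ihA ihB | Or A B ihA ihB =>
    simp only [fv, List.mem_append] at h
    simp only [fsubst, ihA fun x hx => h x (.inl hx), ihB fun x hx => h x (.inr hx)]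
  | Not A ih => simp only [fsubst, ih h]
  | FAll A ih | FEx A ih =>
    simp only [fsubst]
    rw [ih]
    rintro (_ | n) hn
    · rfl
    · simp only [liftSub, h n (mem_preSuc.mpr hn)]

lemma fsubst_id (A : form) : fsubst (fun v => v) A = A := by
  have : liftSub (fun v => v) = fun v => v := by funext v; cases v <;> rfl
  induction A <;> simp_all [fsubst]

lemma mem_fv_fsubst {σ : var → tm} {A : form} {x : var} :
    x ∈ fv (fsubst σ A) ↔ ∃ y ∈ fv A, σ y = x := by
  induction A generalizing σ x with
  | P i tms => simp [fv, fsubst]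
  | Bot | Top => simp [fv, fsubst]
  | And A B ihA ihB | Or A B ihA ihB => simp only [fv, fsubst, List.mem_append, ihA, ihB]; aesop
  | Not A ih => simp [fv, fsubst, ih]
  | FAll A ih | FEx A ih =>
    simp only [fv, fsubst, mem_preSuc, ih]
    constructor
    · rintro ⟨_ | y, hy, hσy⟩
      · simp [liftSub] at hσy
      · exact ⟨y, hy, by simpa [liftSub] using hσy⟩
    · rintro ⟨y, hy, rfl⟩
      exact ⟨y + 1, hy, rfl⟩

lemma fsubst_FAll_inst (σ : var → tm) (t : tm) (A : form) :
    fsubst σ (FAll_inst t A) = FAll_inst (σ t) (fsubst σ A) := by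
  cases A <;> try rfl
  simp only [FAll_inst, fsubst, fsubst_fsubst]
  congr 1; funext v; cases v <;> rfl

lemma fsubst_FEx_inst (σ : var → tm) (t : tm) (A : form) :
    fsubst σ (FEx_inst t A) = FEx_inst (σ t) (fsubst σ A) := by
  cases A <;> try rfl
  simp only [FEx_inst, fsubst, fsubst_fsubst]
  congr 1; funext v; cases v <;> rfl

lemma fsubst_abstract {σ : var → tm} {a b : var} {A : form} (hb : b ∉ fv (fsubst σ A)) :
    fsubst (liftSub σ) (fsubst (fun v => if v = a then 0 else v + 1) A) =
      fsubst (fun v => if v = b then 0 else v + 1) (fsubst (update σ a b) A) := by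
  rw [fsubst_fsubst, fsubst_fsubst]
  refine fsubst_congr fun v hv => ?_
  by_cases hva : v = a
  · simp [hva, liftSub]
  · have hσv : σ v ≠ b := fun h => hb (mem_fv_fsubst.mpr ⟨v, hv, h⟩)
    simp [hva, hσv, liftSub]

lemma fsubst_fAll {σ : var → tm} {a b : var} {A : form} (hb : b ∉ fv (fsubst σ A)) :
    fsubst σ (fAll a A) = fAll b (fsubst (update σ a b) A) :=
  congrArg form.FAll (fsubst_abstract hb)

lemma fsubst_fEx {σ : var → tm} {a b : var} {A : form} (hb : b ∉ fv (fsubst σ A)) :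
    fsubst σ (fEx a A) = fEx b (fsubst (update σ a b) A) :=
  congrArg form.FEx (fsubst_abstract hb)

lemma mem_fvs {x : var} {S : Set form} : x ∈ fvs S ↔ ∃ A ∈ S, x ∈ fv A := by
  simp [fvs]

lemma fvs_union (S T : Set form) : fvs (S ∪ T) = fvs S ∪ fvs T :=
  Set.biUnion_union _ _ _

lemma exists_fresh {S : Set form} (hS : S.Finite) (A : form) :
    ∃ b, b ∉ fv A ∧ b ∉ fvs S := by
  have hfin := (fv A).finite_toSet.union (hS.biUnion fun B _ => (fv B).finite_toSet)
  obtain ⟨b, hb⟩ := hfin.infinite_compl.nonempty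
  exact ⟨b, by simpa [not_or, fvs] using hb⟩

lemma image_fsubst_update_of_notMem_fvs {σ : var → tm} {a b : var} {S : Set form}
    (ha : a ∉ fvs S) : fsubst (update σ a b) '' S = fsubst σ '' S :=
  Set.image_congr fun C hC => fsubst_congr fun x hx =>
    update_of_ne (by rintro rfl; exact ha (mem_fvs.mpr ⟨C, hC, hx⟩)) _ _

def substWeaken (Θ : Set form) (σ : var → tm) (S : Seq) : Seq :=
  (Θ ∪ fsubst σ '' S.1, fsubst σ '' S.2)

def SubstWeakenAdmissible (Θ : Set form) (d : Deriv) : Prop :=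
  is_deriv d → noW d → ∀ σ : var → tm,
    ∃ d', is_deriv d' ∧ noW d' ∧ root d' = substWeaken Θ σ (root d) ∧ height d' = height d

namespace SubstWeakenAdmissible

variable {Θ : Set form} {S : Seq} {d₀ dl dr : Deriv}

theorem init (hΘ : Θ.Finite) : SubstWeakenAdmissible Θ (.Init S) := by
  rintro ⟨hΓ, hΔ, B, hBΓ, hBΔ⟩ - σ
  exact ⟨.Init (substWeaken Θ σ S), ⟨hΘ.union (hΓ.image _), hΔ.image _,
    fsubst σ B, Or.inr (Set.mem_image_of_mem _ hBΓ), Set.mem_image_of_mem _ hBΔ⟩,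
    trivial, rfl, rfl⟩

theorem botL (hΘ : Θ.Finite) : SubstWeakenAdmissible Θ (.BotL S) := by
  rintro ⟨hΓ, hΔ, hBot⟩ - σ
  exact ⟨.BotL (substWeaken Θ σ S), ⟨hΘ.union (hΓ.image _), hΔ.image _,
    Or.inr (Set.mem_image_of_mem _ hBot)⟩, trivial, rfl, rfl⟩

theorem topR (hΘ : Θ.Finite) : SubstWeakenAdmissible Θ (.TopR S) := by
  rintro ⟨hΓ, hΔ, hTop⟩ - σ
  exact ⟨.TopR (substWeaken Θ σ S), ⟨hΘ.union (hΓ.image _), hΔ.image _,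
    Set.mem_image_of_mem _ hTop⟩, trivial, rfl, rfl⟩

theorem andL (hΘ : Θ.Finite) (ih : SubstWeakenAdmissible Θ d₀) :
    SubstWeakenAdmissible Θ (.AndL S d₀) := by
  rintro ⟨hΓ, hΔ, X, Y, hXY, hd₀, hr₀⟩ hnw σ
  obtain ⟨d', hd', hnw', hr', hh'⟩ := ih hd₀ hnw σ
  refine ⟨.AndL (substWeaken Θ σ S) d', ⟨hΘ.union (hΓ.image _), hΔ.image _,
    fsubst σ X, fsubst σ Y, Or.inr (Set.mem_image_of_mem _ hXY), hd', ?_⟩,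
    hnw', rfl, by simp [height, hh']⟩
  rw [hr', hr₀]
  simp only [substWeaken, Set.image_union, Set.image_insert_eq, Set.image_singleton,
    Set.union_left_comm]

theorem andR (hΘ : Θ.Finite) (ihl : SubstWeakenAdmissible Θ dl)
    (ihr : SubstWeakenAdmissible Θ dr) : SubstWeakenAdmissible Θ (.AndR S dl dr) := by
  rintro ⟨hΓ, hΔ, X, Y, hXY, hdl, hrl, hdr, hrr⟩ ⟨hnwl, hnwr⟩ σ
  obtain ⟨dl', hdl', hnwl', hrl', hhl'⟩ := ihl hdl hnwl σ
  obtain ⟨dr', hdr', hnwr', hrr', hhr'⟩ := ihr hdr hnwr σ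
  refine ⟨.AndR (substWeaken Θ σ S) dl' dr', ⟨hΘ.union (hΓ.image _), hΔ.image _,
    fsubst σ X, fsubst σ Y, Set.mem_image_of_mem _ hXY, hdl', ?_, hdr', ?_⟩,
    ⟨hnwl', hnwr'⟩, rfl, by simp [height, hhl', hhr']⟩
  · rw [hrl', hrl]; simp only [substWeaken, Set.image_union, Set.image_singleton]
  · rw [hrr', hrr]; simp only [substWeaken, Set.image_union, Set.image_singleton]

theorem orL (hΘ : Θ.Finite) (ihl : SubstWeakenAdmissible Θ dl)
    (ihr : SubstWeakenAdmissible Θ dr) : SubstWeakenAdmissible Θ (.OrL S dl dr) := by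
  rintro ⟨hΓ, hΔ, X, Y, hXY, hdl, hrl, hdr, hrr⟩ ⟨hnwl, hnwr⟩ σ
  obtain ⟨dl', hdl', hnwl', hrl', hhl'⟩ := ihl hdl hnwl σ
  obtain ⟨dr', hdr', hnwr', hrr', hhr'⟩ := ihr hdr hnwr σ
  refine ⟨.OrL (substWeaken Θ σ S) dl' dr', ⟨hΘ.union (hΓ.image _), hΔ.image _,
    fsubst σ X, fsubst σ Y, Or.inr (Set.mem_image_of_mem _ hXY), hdl', ?_, hdr', ?_⟩,
    ⟨hnwl', hnwr'⟩, rfl, by simp [height, hhl', hhr']⟩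
  · rw [hrl', hrl]
    simp only [substWeaken, Set.image_union, Set.image_singleton, Set.union_left_comm]
  · rw [hrr', hrr]
    simp only [substWeaken, Set.image_union, Set.image_singleton, Set.union_left_comm]

theorem orR (hΘ : Θ.Finite) (ih : SubstWeakenAdmissible Θ d₀) :
    SubstWeakenAdmissible Θ (.OrR S d₀) := by
  rintro ⟨hΓ, hΔ, X, Y, hXY, hd₀, hr₀⟩ hnw σ
  obtain ⟨d', hd', hnw', hr', hh'⟩ := ih hd₀ hnw σ
  refine ⟨.OrR (substWeaken Θ σ S) d', ⟨hΘ.union (hΓ.image _), hΔ.image _,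
    fsubst σ X, fsubst σ Y, Set.mem_image_of_mem _ hXY, hd', ?_⟩,
    hnw', rfl, by simp [height, hh']⟩
  rw [hr', hr₀]
  simp only [substWeaken, Set.image_union, Set.image_insert_eq, Set.image_singleton]

theorem notL (hΘ : Θ.Finite) (ih : SubstWeakenAdmissible Θ d₀) :
    SubstWeakenAdmissible Θ (.NotL S d₀) := by
  rintro ⟨hΓ, hΔ, C, hC, hd₀, hr₀⟩ hnw σ
  obtain ⟨d', hd', hnw', hr', hh'⟩ := ih hd₀ hnw σ
  refine ⟨.NotL (substWeaken Θ σ S) d', ⟨hΘ.union (hΓ.image _), hΔ.image _,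
    fsubst σ C, Or.inr (Set.mem_image_of_mem _ hC), hd', ?_⟩,
    hnw', rfl, by simp [height, hh']⟩
  rw [hr', hr₀]
  simp only [substWeaken, Set.image_union, Set.image_singleton]

theorem notR (hΘ : Θ.Finite) (ih : SubstWeakenAdmissible Θ d₀) :
    SubstWeakenAdmissible Θ (.NotR S d₀) := by
  rintro ⟨hΓ, hΔ, C, hC, hd₀, hr₀⟩ hnw σ
  obtain ⟨d', hd', hnw', hr', hh'⟩ := ih hd₀ hnw σ
  refine ⟨.NotR (substWeaken Θ σ S) d', ⟨hΘ.union (hΓ.image _), hΔ.image _,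
    fsubst σ C, Set.mem_image_of_mem _ hC, hd', ?_⟩,
    hnw', rfl, by simp [height, hh']⟩
  rw [hr', hr₀]
  simp only [substWeaken, Set.image_union, Set.image_singleton, Set.union_left_comm]

theorem allL (hΘ : Θ.Finite) (ih : SubstWeakenAdmissible Θ d₀) :
    SubstWeakenAdmissible Θ (.AllL S d₀) := by
  rintro ⟨hΓ, hΔ, B, a, t, hB, hd₀, hr₀⟩ hnw σ
  obtain ⟨d', hd', hnw', hr', hh'⟩ := ih hd₀ hnw σ
  obtain ⟨b, hb, -⟩ := exists_fresh Set.finite_empty (fsubst σ B)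
  refine ⟨.AllL (substWeaken Θ σ S) d', ⟨hΘ.union (hΓ.image _), hΔ.image _,
    fsubst (update σ a b) B, b, σ t, ?_, hd', ?_⟩, hnw', rfl, by simp [height, hh']⟩
  · rw [← fsubst_fAll hb]; exact Or.inr (Set.mem_image_of_mem _ hB)
  · rw [hr', hr₀, ← fsubst_fAll hb, ← fsubst_FAll_inst]
    simp only [substWeaken, Set.image_union, Set.image_singleton, Set.union_left_comm]

theorem exR (hΘ : Θ.Finite) (ih : SubstWeakenAdmissible Θ d₀) :
    SubstWeakenAdmissible Θ (.ExR S d₀) := by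
  rintro ⟨hΓ, hΔ, B, a, t, hB, hd₀, hr₀⟩ hnw σ
  obtain ⟨d', hd', hnw', hr', hh'⟩ := ih hd₀ hnw σ
  obtain ⟨b, hb, -⟩ := exists_fresh Set.finite_empty (fsubst σ B)
  refine ⟨.ExR (substWeaken Θ σ S) d', ⟨hΘ.union (hΓ.image _), hΔ.image _,
    fsubst (update σ a b) B, b, σ t, ?_, hd', ?_⟩, hnw', rfl, by simp [height, hh']⟩
  · rw [← fsubst_fEx hb]; exact Set.mem_image_of_mem _ hB
  · rw [hr', hr₀, ← fsubst_fEx hb, ← fsubst_FEx_inst]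
    simp only [substWeaken, Set.image_union, Set.image_singleton]

theorem allR (hΘ : Θ.Finite) (ih : SubstWeakenAdmissible Θ d₀) :
    SubstWeakenAdmissible Θ (.AllR S d₀) := by
  rintro ⟨hΓ, hΔ, a, B, hB, ha, hd₀, hr₀⟩ hnw σ
  rw [fvs_union, Set.mem_union, not_or] at ha
  have hfin : (Θ ∪ fsubst σ '' S.1 ∪ fsubst σ '' S.2).Finite :=
    (hΘ.union (hΓ.image _)).union (hΔ.image _)
  obtain ⟨b, hb, hbS⟩ := exists_fresh hfin (fsubst σ B)
  obtain ⟨d', hd', hnw', hr', hh'⟩ := ih hd₀ hnw (update σ a b)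
  refine ⟨.AllR (substWeaken Θ σ S) d', ⟨hΘ.union (hΓ.image _), hΔ.image _,
    b, fsubst (update σ a b) B, ?_, hbS, hd', ?_⟩, hnw', rfl, by simp [height, hh']⟩
  · rw [← fsubst_fAll hb]; exact Set.mem_image_of_mem _ hB
  · rw [hr', hr₀]
    simp only [substWeaken, Set.image_union, image_fsubst_update_of_notMem_fvs ha.1,
      image_fsubst_update_of_notMem_fvs ha.2, Set.image_singleton]

theorem exL (hΘ : Θ.Finite) (ih : SubstWeakenAdmissible Θ d₀) :
    SubstWeakenAdmissible Θ (.ExL S d₀) := by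
  rintro ⟨hΓ, hΔ, a, B, hB, ha, hd₀, hr₀⟩ hnw σ
  rw [fvs_union, Set.mem_union, not_or] at ha
  have hfin : (Θ ∪ fsubst σ '' S.1 ∪ fsubst σ '' S.2).Finite :=
    (hΘ.union (hΓ.image _)).union (hΔ.image _)
  obtain ⟨b, hb, hbS⟩ := exists_fresh hfin (fsubst σ B)
  obtain ⟨d', hd', hnw', hr', hh'⟩ := ih hd₀ hnw (update σ a b)
  refine ⟨.ExL (substWeaken Θ σ S) d', ⟨hΘ.union (hΓ.image _), hΔ.image _,
    b, fsubst (update σ a b) B, ?_, hbS, hd', ?_⟩, hnw', rfl, by simp [height, hh']⟩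
  · rw [← fsubst_fEx hb]; exact Or.inr (Set.mem_image_of_mem _ hB)
  · rw [hr', hr₀]
    simp only [substWeaken, Set.image_union, image_fsubst_update_of_notMem_fvs ha.1,
      image_fsubst_update_of_notMem_fvs ha.2, Set.image_singleton, Set.union_left_comm]

end SubstWeakenAdmissible

theorem substWeakenAdmissible {Θ : Set form} (hΘ : Θ.Finite) (d : Deriv) :
    SubstWeakenAdmissible Θ d := by
  induction d with
  | Init => exact .init hΘ
  | BotL => exact .botL hΘ
  | TopR => exact .topR hΘ
  | AndL _ _ ih => exact .andL hΘ ih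
  | AndR _ _ _ ihl ihr => exact .andR hΘ ihl ihr
  | OrL _ _ _ ihl ihr => exact .orL hΘ ihl ihr
  | OrR _ _ ih => exact .orR hΘ ih
  | NotL _ _ ih => exact .notL hΘ ih
  | NotR _ _ ih => exact .notR hΘ ih
  | AllL _ _ ih => exact .allL hΘ ih
  | AllR _ _ ih => exact .allR hΘ ih
  | ExL _ _ ih => exact .exL hΘ ih
  | ExR _ _ ih => exact .exR hΘ ih
  | WL | WR => exact fun _ hnw => hnw.elim

theorem weakening_left_admissible (d : Deriv) (Γ Δ : Set form) (A : form)
    (hd : is_deriv d) (hnw : noW d) (hr : root d = (Γ, Δ)) :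
    ∃ d', is_deriv d' ∧ noW d' ∧ root d' = ({A} ∪ Γ, Δ) ∧ height d' = height d := by
  obtain ⟨d', hd', hnw', hr', hh'⟩ :=
    substWeakenAdmissible (Set.finite_singleton A) d hd hnw fun v => v
  refine ⟨d', hd', hnw', ?_, hh'⟩
  simp only [hr', hr, substWeaken, fsubst_id, Set.image_id']

end Craig
end
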